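/- Let L ∈ K[D] be of order r, P ∈ K[D], q ∈ K with DP = qL. Then q is a rational solution of the adjoint operator L*, i.e., L*·q = 0. -/

import Mathlib

/- Framework: linear differential operators over K = C(x), represented as
   `Polynomial (RatFunc C)` where `X^i` stands for `D^i` (coefficients on the left);
   local (Puiseux/Hahn series) solutions at finite points and at infinity;
   integrality; constants and pseudoconstants of `K[D]/⟨L⟩`. -/

noncomputable section
open Polynomial

variable (C : Type) [Field C] [IsAlgClosed C] [CharZero C]

/-- The derivative d/dx on K = C(x). -/
def KDeriv (r : RatFunc C) : RatFunc C :=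
  (algebraMap (Polynomial C) (RatFunc C) (derivative r.num) * algebraMap _ _ r.denom
    - algebraMap _ _ r.num * algebraMap _ _ (derivative r.denom))
  / (algebraMap (Polynomial C) (RatFunc C) r.denom) ^ 2

/-- Linear differential operators `∑ aᵢ Dⁱ` with `aᵢ ∈ C(x)`, encoded as polynomials
    whose `i`-th coefficient is the coefficient of `Dⁱ`. -/
abbrev DOp := Polynomial (RatFunc C)

/-- Left multiplication by `D` in `K[D]`: `D·(∑ aᵢ Dⁱ) = ∑ aᵢ Dⁱ⁺¹ + ∑ aᵢ' Dⁱ`. -/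
def Dmul (P : DOp C) : DOp C :=
  X * P + P.sum fun i a => Polynomial.C (KDeriv C a) * X ^ i

/-- Multiplication (composition) in the noncommutative ring `K[D]`. -/
def opMul (P Q : DOp C) : DOp C :=
  P.sum fun i a => Polynomial.C a * (Dmul C)^[i] Q

/-- The adjoint `L ↦ L*`: `(∑ aᵢ Dⁱ)* = ∑ (−D)ⁱ aᵢ`. -/
def adjoint (L : DOp C) : DOp C :=
  L.sum fun i a => (-1) ^ i * (Dmul C)^[i] (Polynomial.C a)

/-- Application of an operator to an element of `K` itself (rational solutions). -/
def KApply (L : DOp C) (q : RatFunc C) : RatFunc C :=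
  L.sum fun i a => a * (KDeriv C)^[i] q

/-- `[P]_L` is zero in `K[D]/⟨L⟩`, i.e. `P` is a left multiple of `L`. -/
def IsZeroClass (L P : DOp C) : Prop := ∃ Q : DOp C, P = opMul C Q L

/-- `[P]_L` is a constant of `K[D]/⟨L⟩`, i.e. `D·[P]_L = [0]_L`. -/
def IsConstantClass (L P : DOp C) : Prop := ∃ Q : DOp C, Dmul C P = opMul C Q L

/-- `N = lclm(L, M)`: the monic common left multiple of `L` and `M` of lowest order. -/
def IsLCLM (L M N : DOp C) : Prop :=
  N.Monic ∧ (∃ A, N = opMul C A L) ∧ (∃ B, N = opMul C B M) ∧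
    ∀ N' : DOp C, N'.Monic → (∃ A, N' = opMul C A L) → (∃ B, N' = opMul C B M) →
      N.natDegree ≤ N'.natDegree

/-- A differential field extension of `K = C(x)`. -/
structure DiffExt where
  carrier : Type
  [isField : Field carrier]
  [isAlgK : Algebra (RatFunc C) carrier]
  [isAlgC : Algebra C carrier]
  [isTower : IsScalarTower C (RatFunc C) carrier]
  δ : carrier → carrier
  δ_add : ∀ a b, δ (a + b) = δ a + δ b
  δ_mul : ∀ a b, δ (a * b) = a * δ b + δ a * b
  δ_algebraMap : ∀ r : RatFunc C,
    δ (algebraMap (RatFunc C) carrier r) = algebraMap (RatFunc C) carrier (KDeriv C r)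

attribute [instance] DiffExt.isField DiffExt.isAlgK DiffExt.isAlgC DiffExt.isTower

/-- Application of an operator `L = ∑ aᵢ Dⁱ` to an element of a differential extension. -/
def DiffExt.apply (F : DiffExt C) (L : DOp C) (f : F.carrier) : F.carrier :=
  L.sum fun i a => algebraMap (RatFunc C) F.carrier a * F.δ^[i] f

/-- Formal derivative `d/dt` on generalized (Hahn/Puiseux) series with rational exponents. -/
def hderiv (f : HahnSeries ℚ C) : HahnSeries ℚ C :=
  HahnSeries.embDomain (OrderIso.addRight (-1 : ℚ)).toOrderEmbedding
    { coeff := fun γ => γ • f.coeff γ,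
      isPWO_support' := f.isPWO_support.mono (by
        intro γ hγ
        simp only [Function.mem_support, ne_eq] at hγ ⊢
        intro hc
        exact hγ (by rw [hc, smul_zero]) ) }

/-- The derivation `d/dx = -t² d/dt` on series at infinity, in the local coordinate `t = 1/x`. -/
def dinf (f : HahnSeries ℚ C) : HahnSeries ℚ C :=
  -(HahnSeries.single (2 : ℚ) (1 : C) * hderiv C f)

/-- `ι` is a series expansion of `C(x)` (at a finite point for `δ = hderiv`, at infinity
    for `δ = dinf`), i.e. a ring embedding compatible with differentiation. -/
def IsExpansion (δ : HahnSeries ℚ C → HahnSeries ℚ C)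
    (ι : RatFunc C →+* HahnSeries ℚ C) : Prop :=
  ∀ r, ι (KDeriv C r) = δ (ι r)

/-- Application of an operator to a local series solution via the expansion `ι`. -/
def localApply (δ : HahnSeries ℚ C → HahnSeries ℚ C)
    (ι : RatFunc C →+* HahnSeries ℚ C) (L : DOp C) (f : HahnSeries ℚ C) : HahnSeries ℚ C :=
  L.sum fun i a => ι a * δ^[i] f

/-- A series is integral if it has no pole, i.e. all exponents are ≥ 0. -/
def IntegralSeries (f : HahnSeries ℚ C) : Prop := ∀ γ < (0 : ℚ), f.coeff γ = 0

/-- `[P]_L` is completely integral: at every point of `C ∪ {∞}` and every local series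
    solution `f` of `L` there, `P·f` has no pole. -/
def CompletelyIntegral (L P : DOp C) : Prop :=
  ∀ δ ∈ ({hderiv C, dinf C} : Set (HahnSeries ℚ C → HahnSeries ℚ C)),
    ∀ ι : RatFunc C →+* HahnSeries ℚ C, IsExpansion C δ ι →
      ∀ f : HahnSeries ℚ C, localApply C δ ι L f = 0 →
        IntegralSeries C (localApply C δ ι P f)

/-- A pseudoconstant of `L`: a completely integral element of `K[D]/⟨L⟩` that is not
    a constant. -/
def IsPseudoconstant (L P : DOp C) : Prop :=
  CompletelyIntegral C L P ∧ ¬ IsConstantClass C L P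

def HasPseudoconstant (L : DOp C) : Prop := ∃ P : DOp C, IsPseudoconstant C L P

/-- `S` is the `s`-th symmetric power of `L`: the monic operator of minimal order
    annihilating all products of `s` solutions of `L`. -/
def IsSymPow (L S : DOp C) (s : ℕ) : Prop :=
  S.Monic ∧
  (∀ F : DiffExt C, ∀ f : Fin s → F.carrier,
      (∀ i, F.apply C L (f i) = 0) → F.apply C S (∏ i, f i) = 0) ∧
  (∀ S' : DOp C, S'.Monic →
      (∀ F : DiffExt C, ∀ f : Fin s → F.carrier,
        (∀ i, F.apply C L (f i) = 0) → F.apply C S' (∏ i, f i) = 0) →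
      S.natDegree ≤ S'.natDegree)

/-- `L` has only algebraic solutions: there is an algebraic differential extension of `K`
    in which the solution space of `L` has dimension `ord L`. -/
def AllAlgebraic (L : DOp C) : Prop :=
  ∃ F : DiffExt C, Algebra.IsAlgebraic (RatFunc C) F.carrier ∧
    ∃ b : Fin L.natDegree → F.carrier,
      (∀ i, F.apply C L (b i) = 0) ∧ LinearIndependent C b

/-! Taking adjoints of `DP = qL` gives `−P*D = L*q`; evaluate both sides at `1`. The right
side is `L*·q` and the left side vanishes because `D·1 = 0`. Rather than developing the
anti-multiplicativity of `*`, the two evaluations `(qL)*·1 = L*·q` and `(DP)*·1 = 0` are checked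
directly on monomials `a Dⁿ`, where `(a Dⁿ)*·q = (−1)ⁿ (a q)⁽ⁿ⁾`. -/

section

variable {C}
omit [IsAlgClosed C] [CharZero C]

/-- The quotient rule holds for every representation `p / s`, not only the reduced one
used to define `KDeriv`. -/
theorem KDeriv_div_algebraMap (p s : C[X]) (hs : s ≠ 0) :
    KDeriv C (algebraMap C[X] (RatFunc C) p / algebraMap C[X] (RatFunc C) s) =
      algebraMap C[X] (RatFunc C) (derivative p * s - p * derivative s) /
        algebraMap C[X] (RatFunc C) (s ^ 2) := by
  set r := algebraMap C[X] (RatFunc C) p / algebraMap C[X] (RatFunc C) s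
  have hcross : r.num * s = p * r.denom := (RatFunc.num_mul_eq_mul_denom_iff hs).mpr rfl
  have hcross' : derivative r.num * s + r.num * derivative s =
      derivative p * r.denom + p * derivative r.denom := by
    simpa only [derivative_mul] using congrArg derivative hcross
  have key : (derivative r.num * r.denom - r.num * derivative r.denom) * s ^ 2 =
      (derivative p * s - p * derivative s) * r.denom ^ 2 := by
    linear_combination (-(derivative r.denom * s + derivative s * r.denom)) * hcross +
      (s * r.denom) * hcross'
  rw [KDeriv, div_eq_div_iff (pow_ne_zero 2 (RatFunc.algebraMap_ne_zero r.denom_ne_zero))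
    (RatFunc.algebraMap_ne_zero (pow_ne_zero 2 hs))]
  simpa only [map_mul, map_sub, map_pow] using congrArg (algebraMap C[X] (RatFunc C)) key

theorem KDeriv_add (a b : RatFunc C) : KDeriv C (a + b) = KDeriv C a + KDeriv C b := by
  have ha := RatFunc.algebraMap_ne_zero a.denom_ne_zero
  have hb := RatFunc.algebraMap_ne_zero b.denom_ne_zero
  rw [← a.num_div_denom, ← b.num_div_denom, div_add_div _ _ ha hb, ← map_mul, ← map_mul,
    ← map_mul, ← map_add, KDeriv_div_algebraMap _ _ (mul_ne_zero a.denom_ne_zero b.denom_ne_zero),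
    KDeriv_div_algebraMap _ _ a.denom_ne_zero, KDeriv_div_algebraMap _ _ b.denom_ne_zero]
  simp only [derivative_mul, map_add, map_sub, map_mul, map_pow]
  field_simp
  ring

theorem KDeriv_mul (a b : RatFunc C) : KDeriv C (a * b) = a * KDeriv C b + KDeriv C a * b := by
  have ha := RatFunc.algebraMap_ne_zero a.denom_ne_zero
  have hb := RatFunc.algebraMap_ne_zero b.denom_ne_zero
  rw [← a.num_div_denom, ← b.num_div_denom, div_mul_div_comm, ← map_mul, ← map_mul,
    KDeriv_div_algebraMap _ _ (mul_ne_zero a.denom_ne_zero b.denom_ne_zero),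
    KDeriv_div_algebraMap _ _ a.denom_ne_zero, KDeriv_div_algebraMap _ _ b.denom_ne_zero]
  simp only [derivative_mul, map_add, map_sub, map_mul, map_pow]
  field_simp
  ring

theorem Dmul_zero : Dmul C 0 = 0 := by
  simp [Dmul]

theorem Dmul_add (P Q : DOp C) : Dmul C (P + Q) = Dmul C P + Dmul C Q := by
  unfold Dmul
  rw [sum_add_index _ _ _ (fun _ => by simp [KDeriv])
    (fun _ _ _ => by rw [KDeriv_add, map_add, add_mul])]
  ring

theorem Dmul_monomial (n : ℕ) (a : RatFunc C) :
    Dmul C (monomial n a) = monomial (n + 1) a + monomial n (KDeriv C a) := by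
  rw [Dmul, sum_monomial_index _ _ (by simp [KDeriv]), X_mul_monomial, C_mul_X_pow_eq_monomial]

theorem Dmul_iterate_zero (n : ℕ) : (Dmul C)^[n] 0 = 0 :=
  Function.iterate_fixed Dmul_zero n

theorem Dmul_iterate_add (n : ℕ) (P Q : DOp C) :
    (Dmul C)^[n] (P + Q) = (Dmul C)^[n] P + (Dmul C)^[n] Q :=
  iterate_map_add (AddMonoidHom.mk' (Dmul C) Dmul_add) n P Q

theorem opMul_C (q : RatFunc C) (L : DOp C) : opMul C (Polynomial.C q) L = Polynomial.C q * L := by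
  rw [opMul, sum_C_index (by rw [map_zero, zero_mul]), Function.iterate_zero_apply]

theorem KApply_add (P Q : DOp C) (q : RatFunc C) :
    KApply C (P + Q) q = KApply C P q + KApply C Q q :=
  sum_add_index _ _ _ (fun _ => zero_mul _) (fun _ _ _ => add_mul _ _ _)

theorem KApply_monomial (n : ℕ) (a q : RatFunc C) :
    KApply C (monomial n a) q = a * (KDeriv C)^[n] q :=
  sum_monomial_index _ _ (zero_mul _)

theorem KApply_C (a q : RatFunc C) : KApply C (Polynomial.C a) q = a * q := by
  rw [← monomial_zero_left, KApply_monomial, Function.iterate_zero_apply]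

theorem KApply_C_mul (a : RatFunc C) (M : DOp C) (q : RatFunc C) :
    KApply C (Polynomial.C a * M) q = a * KApply C M q := by
  induction M using Polynomial.induction_on' with
  | add P Q hP hQ => rw [mul_add, KApply_add, hP, hQ, KApply_add, mul_add]
  | monomial n b => rw [C_mul_monomial, KApply_monomial, KApply_monomial, mul_assoc]

theorem KApply_Dmul (P : DOp C) (q : RatFunc C) :
    KApply C (Dmul C P) q = KDeriv C (KApply C P q) := by
  induction P using Polynomial.induction_on' with
  | add P Q hP hQ => rw [Dmul_add, KApply_add, hP, hQ, KApply_add, KDeriv_add]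
  | monomial n a =>
    rw [Dmul_monomial, KApply_add, KApply_monomial, KApply_monomial, KApply_monomial,
      KDeriv_mul, Function.iterate_succ_apply']

theorem KApply_iterate_Dmul (n : ℕ) (P : DOp C) (q : RatFunc C) :
    KApply C ((Dmul C)^[n] P) q = (KDeriv C)^[n] (KApply C P q) := by
  induction n with
  | zero => rfl
  | succ n ih => rw [Function.iterate_succ_apply', KApply_Dmul, ih, Function.iterate_succ_apply']

theorem adjoint_add (P Q : DOp C) : adjoint C (P + Q) = adjoint C P + adjoint C Q :=
  sum_add_index _ _ _ (fun _ => by rw [map_zero, Dmul_iterate_zero, mul_zero])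
    (fun _ _ _ => by rw [map_add, Dmul_iterate_add, mul_add])

theorem KApply_adjoint_monomial (n : ℕ) (a q : RatFunc C) :
    KApply C (adjoint C (monomial n a)) q = (-1) ^ n * (KDeriv C)^[n] (a * q) := by
  rw [adjoint, sum_monomial_index _ _ (by rw [map_zero, Dmul_iterate_zero, mul_zero]),
    ← map_one Polynomial.C, ← map_neg, ← map_pow, KApply_C_mul, KApply_iterate_Dmul, KApply_C]

theorem KApply_adjoint_C_mul_one (q : RatFunc C) (L : DOp C) :
    KApply C (adjoint C (Polynomial.C q * L)) 1 = KApply C (adjoint C L) q := by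
  induction L using Polynomial.induction_on' with
  | add P Q hP hQ => rw [mul_add, adjoint_add, KApply_add, hP, hQ, adjoint_add, KApply_add]
  | monomial n a =>
    rw [C_mul_monomial, KApply_adjoint_monomial, KApply_adjoint_monomial, mul_one, mul_comm q]

theorem KApply_adjoint_Dmul_one (P : DOp C) : KApply C (adjoint C (Dmul C P)) 1 = 0 := by
  induction P using Polynomial.induction_on' with
  | add P Q hP hQ => rw [Dmul_add, adjoint_add, KApply_add, hP, hQ, add_zero]
  | monomial n a =>
    rw [Dmul_monomial, adjoint_add, KApply_add, KApply_adjoint_monomial, KApply_adjoint_monomial,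
      mul_one, mul_one, Function.iterate_succ_apply, pow_succ]
    ring

end

/-- If `DP = qL` with `q ∈ K`, then `q` is a rational solution of the adjoint:
`L*·q = 0`. -/
theorem adjoint_rational_solution (L P : DOp C) (q : RatFunc C)
    (h : Dmul C P = opMul C (Polynomial.C q) L) :
    KApply C (adjoint C L) q = 0 := by
  rw [← KApply_adjoint_C_mul_one, ← opMul_C, ← h, KApply_adjoint_Dmul_one]

end
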